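/- arXiv:2202.08119 — 3 statements merged into one kernel-verified Lean document; each statement's English description precedes it below -/
import Mathlib

section
/- Let C be a d×d unitary complex matrix and p a natural number. Then Tr((2·I − C − Cᴴ)^p) = Σ_{i=−p}^{p} (−1)^i · binom(2p, p+i) · Tr(C^i), where Cᴴ is the conjugate transpose, C^i for negative i denotes (C⁻¹)^{−i}, and binom denotes the binomial coefficient. -/
/-!
Since `C⁻¹ = Cᴴ`, one has `2 - C - C⁻¹ = -(1 - C)² C⁻¹`, and all factors commute. Hence
`(2 - C - C⁻¹)^p = (-1)^p (1 - C)^{2p} C^{-p}`; expanding `(1 - C)^{2p}` binomially and shifting the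
summation index by `p` gives the formula for any unit of any ring; the trace is linear.
-/

open Finset

variable {R : Type*} [Ring R]

theorem Units.two_sub_sub_inv_eq (u : Rˣ) : (2 : R) - u - ↑u⁻¹ = -(1 - u) ^ 2 * ↑u⁻¹ := by
  have h : -(1 - (u : R)) ^ 2 * ↑u⁻¹ = 2 * (u * ↑u⁻¹) - ↑u⁻¹ - u * (u * ↑u⁻¹) := by noncomm_ring
  rw [h, Units.mul_inv, mul_one, mul_one]
  abel

theorem one_sub_pow_eq_sum (x : R) (n : ℕ) :
    (1 - x) ^ n = ∑ m ∈ range (n + 1), ((-1) ^ m * n.choose m : ℤ) • x ^ m := by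
  rw [sub_eq_neg_add, (Commute.one_right _).add_pow]
  refine sum_congr rfl fun m _ => ?_
  rw [neg_pow, one_pow, mul_one, mul_assoc, ← (Nat.cast_commute _ _).eq, ← mul_assoc, zsmul_eq_mul]
  push_cast
  rfl

theorem Units.two_sub_sub_inv_pow_eq_sum_range (u : Rˣ) (p : ℕ) :
    ((2 : R) - u - ↑u⁻¹) ^ p =
      ∑ m ∈ range (2 * p + 1),
        ((-1) ^ (p + m) * (2 * p).choose m : ℤ) • ((u ^ ((m : ℤ) - p) : Rˣ) : R) := by
  have hcomm : Commute (-(1 - u) ^ 2 : R) ↑u⁻¹ :=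
    (((Commute.one_left _).sub_left u.commute_coe_inv).pow_left 2).neg_left
  rw [two_sub_sub_inv_eq, hcomm.mul_pow, neg_pow, ← pow_mul, one_sub_pow_eq_sum, mul_sum, sum_mul]
  refine sum_congr rfl fun m _ => ?_
  rw [zpow_sub, zpow_natCast, zpow_natCast, ← inv_pow, Units.val_mul, Units.val_pow_eq_pow_val,
    Units.val_pow_eq_pow_val]
  simp only [pow_add, zsmul_eq_mul]
  push_cast
  simp only [mul_assoc]

theorem Finset.sum_Icc_neg_eq_sum_range {M : Type*} [AddCommMonoid M] (f : ℤ → M) (p : ℕ) :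
    ∑ i ∈ Icc (-(p : ℤ)) p, f i = ∑ m ∈ range (2 * p + 1), f (m - p) := by
  rw [Int.Icc_eq_finset_map, sum_map, show ((p : ℤ) + 1 - -p).toNat = 2 * p + 1 by omega]
  simp [neg_add_eq_sub]

theorem Units.two_sub_sub_inv_pow (u : Rˣ) (p : ℕ) :
    ((2 : R) - u - ↑u⁻¹) ^ p =
      ∑ i ∈ Icc (-(p : ℤ)) p,
        ((i.negOnePow : ℤ) * (2 * p).choose ((p : ℤ) + i).toNat) • ((u ^ i : Rˣ) : R) := by
  rw [two_sub_sub_inv_pow_eq_sum_range, sum_Icc_neg_eq_sum_range]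
  refine sum_congr rfl fun m _ => ?_
  rw [add_sub_cancel, Int.toNat_natCast, Int.negOnePow_sub, ← Int.negOnePow_add, ← Nat.cast_add,
    Int.coe_negOnePow_natCast, add_comm]

open Matrix

/-- **Trace formula for powers of `2I − C − Cᴴ` with `C` unitary.**
For a `d×d` unitary complex matrix `C` and any `p : ℕ`,
`Tr((2I − C − Cᴴ)^p) = ∑_{i=−p}^{p} (−1)^i · binom(2p, p+i) · Tr(C^i)`,
where `C^i` for negative `i` is the integer (zpow) power of the matrix `C`. -/
theorem trace_pow_two_sub_unitary (d : ℕ) (C : Matrix (Fin d) (Fin d) ℂ)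
    (hC : C ∈ Matrix.unitaryGroup (Fin d) ℂ) (p : ℕ) :
    Matrix.trace (((2 : Matrix (Fin d) (Fin d) ℂ) - C - Cᴴ) ^ p) =
      ∑ i ∈ Finset.Icc (-(p : ℤ)) (p : ℤ),
        (((i.negOnePow : ℤ) * ((2 * p).choose ((p : ℤ) + i).toNat : ℤ) : ℤ) : ℂ) *
          Matrix.trace (C ^ i) := by
  let u := Unitary.toUnits (⟨C, hC⟩ : unitaryGroup (Fin d) ℂ)
  calc trace (((2 : Matrix (Fin d) (Fin d) ℂ) - C - Cᴴ) ^ p)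
      = trace (((2 : Matrix (Fin d) (Fin d) ℂ) - ↑u - ↑u⁻¹) ^ p) := rfl
    _ = _ := by
      rw [u.two_sub_sub_inv_pow, trace_sum]
      refine sum_congr rfl fun i _ => ?_
      rw [trace_smul, coe_units_zpow, zsmul_eq_mul]
      rfl
end

section
/- Let m ≥ 1 and d ≥ 1 be natural numbers, let H₁, …, H_m be d×d complex matrices, and set H := Σ_{i=1}^m H_i. Let W := (1/√m)·Σ_{i=1}^m e_i ∈ ℂ^m be the uniform superposition vector, and let C be the (md)×(md) block-diagonal matrix C := Σ_{i=1}^m (e_i e_iᴴ) ⊗ H_i acting on ℂ^{Fin m × Fin d}. Then for every ψ ∈ ℂ^d, ⟨C(W ⊗ ψ), ((W·Wᴴ) ⊗ I_d)·C(W ⊗ ψ)⟩ = (1/m²)·‖H·ψ‖². -/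
open Matrix Kronecker

/-- **Acceptance probability of the controlled-Hamiltonian circuit.**
Let `H = ∑ᵢ Hᵢ` with each `Hᵢ` a `d×d` complex matrix, `W = (1/√m)·∑ᵢ eᵢ` the uniform
superposition on `ℂ^m`, and `C = ∑ᵢ (eᵢeᵢᴴ) ⊗ Hᵢ` the block-diagonal controlled matrix
on `ℂ^{Fin m × Fin d}`.  Then for every `ψ ∈ ℂ^d`,
`⟨C(W ⊗ ψ), ((WWᴴ) ⊗ I)·C(W ⊗ ψ)⟩ = (1/m²)·‖Hψ‖²`. -/
theorem controlled_hamiltonian_acceptance (m d : ℕ) (hm : 1 ≤ m) (hd : 1 ≤ d)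
    (Hi : Fin m → Matrix (Fin d) (Fin d) ℂ)
    (H : Matrix (Fin d) (Fin d) ℂ) (hH : H = ∑ i, Hi i)
    (W : Fin m → ℂ) (hW : W = fun _ => ((Real.sqrt m : ℂ))⁻¹)
    (C : Matrix (Fin m × Fin d) (Fin m × Fin d) ℂ)
    (hC : C = ∑ i, (Matrix.single i i (1 : ℂ)) ⊗ₖ Hi i)
    (ψ : Fin d → ℂ) :
    ∑ x : Fin m × Fin d,
        (starRingEnd ℂ) ((C *ᵥ fun p => W p.1 * ψ p.2) x) *
          (((Matrix.vecMulVec W (star W)) ⊗ₖ (1 : Matrix (Fin d) (Fin d) ℂ)) *ᵥ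
            (C *ᵥ fun p => W p.1 * ψ p.2)) x =
      ((m : ℂ) ^ 2)⁻¹ * ∑ j, (starRingEnd ℂ) ((H *ᵥ ψ) j) * (H *ᵥ ψ) j := by
  subst hH hW hC
  set c : ℂ := ((Real.sqrt m : ℂ))⁻¹ with hcdef
  have hv : ((∑ i, (Matrix.single i i (1 : ℂ)) ⊗ₖ Hi i) *ᵥ
      fun p : Fin m × Fin d => c * ψ p.2) = fun p => c * ((Hi p.1 *ᵥ ψ) p.2) := by
    funext p
    obtain ⟨i, j⟩ := p
    simp [Matrix.mulVec, dotProduct, Matrix.sum_apply, Matrix.kroneckerMap_apply,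
      Matrix.single, Fintype.sum_prod_type, Finset.mul_sum, Finset.sum_mul,
      ite_and, mul_comm, mul_left_comm]
    exact Finset.sum_congr rfl fun k _ => by ring
  have hsum : ∀ j, ((∑ i, Hi i) *ᵥ ψ) j = ∑ i, (Hi i *ᵥ ψ) j := by
    intro j
    simp only [Matrix.mulVec, dotProduct, Matrix.sum_apply, Finset.sum_mul]
    rw [Finset.sum_comm]
  have hv2 : ((Matrix.vecMulVec (fun _ : Fin m => c) (star fun _ : Fin m => c)) ⊗ₖ
        (1 : Matrix (Fin d) (Fin d) ℂ)) *ᵥ (fun p : Fin m × Fin d => c * ((Hi p.1 *ᵥ ψ) p.2))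
      = fun p => c ^ 3 * (((∑ i, Hi i) *ᵥ ψ) p.2) := by
    funext p
    obtain ⟨i, j⟩ := p
    simp only [hcdef, Matrix.mulVec, dotProduct, Matrix.vecMulVec_apply,
      Matrix.kroneckerMap_apply, Matrix.one_apply, Fintype.sum_prod_type, Matrix.sum_apply,
      Pi.star_apply, Complex.star_def, Complex.conj_ofReal, map_inv₀, mul_ite, ite_mul,
      mul_one, one_mul, mul_zero, zero_mul, Finset.sum_ite_eq, Finset.mem_univ, if_true]
    simp only [Finset.mul_sum, Finset.sum_mul]
    rw [Finset.sum_comm]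
    congr 1; funext k; congr 1; funext l; ring
  rw [hv, hv2]
  have hconjc : (starRingEnd ℂ) c = c := by
    simp [hcdef, map_inv₀, Complex.conj_ofReal]
  have hc4 : c ^ 4 = ((m : ℂ) ^ 2)⁻¹ := by
    have h2 : ((Real.sqrt m : ℝ) : ℂ) ^ 2 = (m : ℂ) := by
      rw [← Complex.ofReal_pow, Real.sq_sqrt (Nat.cast_nonneg m)]
      push_cast; ring
    rw [hcdef, inv_pow, ← h2, ← pow_mul]
  rw [Fintype.sum_prod_type, Finset.sum_comm, Finset.mul_sum]
  refine Finset.sum_congr rfl fun j _ => ?_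
  calc ∑ i, (starRingEnd ℂ) (c * (Hi i *ᵥ ψ) j) * (c ^ 3 * (((∑ i, Hi i) *ᵥ ψ) j))
      = (∑ i, (starRingEnd ℂ) ((Hi i *ᵥ ψ) j)) *
          ((starRingEnd ℂ) c * (c ^ 3 * (((∑ i, Hi i) *ᵥ ψ) j))) := by
        rw [Finset.sum_mul]
        refine Finset.sum_congr rfl fun i _ => ?_
        simp only [_root_.map_mul]; ring
    _ = ((m : ℂ) ^ 2)⁻¹ * ((starRingEnd ℂ) ((((∑ i, Hi i)) *ᵥ ψ) j) * (((∑ i, Hi i) *ᵥ ψ) j)) := by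
        rw [← map_sum, ← hsum j, hconjc, ← hc4]; ring
end

section
/- Let M be a Hermitian matrix on ℂ^{Fin a × Fin b} (a, b ≥ 1) such that M commutes with I_a ⊗ D for every diagonal b×b complex matrix D (where ⊗ is the Kronecker product and I_a the a×a identity). Then there exist an index σ ∈ Fin b and a unit vector ψ ∈ ℂ^a such that M(ψ ⊗ e_σ) = λ_max(M)·(ψ ⊗ e_σ), i.e., M admits a maximal eigenvector of product form with a standard basis vector on the second factor. -/
open Matrix Kronecker

/-! Because `M` commutes with the projection `1 ⊗ diagonal e_σ` onto the `σ`-th block, that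
projection maps the top eigenspace of `M` into itself. Taking `σ` where a top eigenvector has a
nonzero entry, its projection is a nonzero top eigenvector of the form `ψ ⊗ e_σ`; then normalize
`ψ`. -/

namespace Matrix

variable {m n α : Type*}

theorem one_kronecker_diagonal [MulZeroOneClass α] [DecidableEq m] [DecidableEq n] (d : n → α) :
    (1 : Matrix m m α) ⊗ₖ diagonal d = diagonal fun p => d p.2 := by
  simp only [← diagonal_one, diagonal_kronecker_diagonal, one_mul]

theorem one_kronecker_diagonal_single_mulVec [Fintype m] [Fintype n] [DecidableEq m]
    [DecidableEq n] [NonAssocSemiring α] (σ : n) (u : m × n → α) :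
    ((1 : Matrix m m α) ⊗ₖ diagonal (Pi.single σ 1)) *ᵥ u =
      fun p => u (p.1, σ) * (Pi.single σ 1 : n → α) p.2 := by
  ext ⟨i, j⟩
  rw [one_kronecker_diagonal, mulVec_diagonal]
  rcases eq_or_ne j σ with rfl | hj
  · simp
  · simp [hj]

theorem _root_.Commute.mulVec_mulVec_eq_smul {S : Type*} [Fintype n] [NonUnitalSemiring α]
    [Monoid S] [DistribMulAction S α] [SMulCommClass S α α] {A B : Matrix n n α}
    (hAB : Commute A B) {c : S} {u : n → α} (hu : A *ᵥ u = c • u) :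
    A *ᵥ (B *ᵥ u) = c • (B *ᵥ u) := by
  rw [mulVec_mulVec, hAB.eq, ← mulVec_mulVec, hu, mulVec_smul]

theorem exists_norm_eq_one_mulVec_prod_eq_smul {𝕜 : Type*} [RCLike 𝕜] [Fintype m] [Fintype n]
    {M : Matrix (m × n) (m × n) 𝕜} {w : n → 𝕜} {c : 𝕜} {ψ : EuclideanSpace 𝕜 m}
    (hψ : ψ ≠ 0)
    (h : M *ᵥ (fun p => ψ p.1 * w p.2) = c • fun p => ψ p.1 * w p.2) :
    ∃ ψ' : EuclideanSpace 𝕜 m, ‖ψ'‖ = 1 ∧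
      M *ᵥ (fun p => ψ' p.1 * w p.2) = c • fun p => ψ' p.1 * w p.2 := by
  refine ⟨(‖ψ‖⁻¹ : 𝕜) • ψ, norm_smul_inv_norm hψ, ?_⟩
  have hscale : (fun p : m × n => ((‖ψ‖⁻¹ : 𝕜) • ψ) p.1 * w p.2) =
      (‖ψ‖⁻¹ : 𝕜) • fun p => ψ p.1 * w p.2 := by
    ext p
    simp [mul_assoc]
  rw [hscale, mulVec_smul, h, smul_comm]

end Matrix

/-- **Product-form maximal eigenvector.**
Let `M` be a Hermitian matrix on `ℂ^{Fin a × Fin b}` (`a, b ≥ 1`) commuting with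
`I ⊗ D` for every diagonal `b×b` matrix `D`.  Then `M` has a maximal eigenvector of
product form `ψ ⊗ e_σ`, with `ψ ∈ ℂ^a` a unit vector and `e_σ` a standard basis
vector: `M(ψ ⊗ e_σ) = λ_max(M)·(ψ ⊗ e_σ)`. -/
theorem product_form_max_eigenvector (a b : ℕ) (ha : 1 ≤ a) (hb : 1 ≤ b)
    (M : Matrix (Fin a × Fin b) (Fin a × Fin b) ℂ) (hM : M.IsHermitian)
    (hcomm : ∀ D : Matrix (Fin b) (Fin b) ℂ, D.IsDiag →
      Commute M ((1 : Matrix (Fin a) (Fin a) ℂ) ⊗ₖ D)) :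
    ∃ (σ : Fin b) (ψ : EuclideanSpace ℂ (Fin a)), ‖ψ‖ = 1 ∧
      (M *ᵥ fun p => ψ p.1 * (Pi.single σ 1 : Fin b → ℂ) p.2) =
        fun p => ((⨆ i, hM.eigenvalues i : ℝ) : ℂ) *
          (ψ p.1 * (Pi.single σ 1 : Fin b → ℂ) p.2) := by
  have : Nonempty (Fin a) := Fin.pos_iff_nonempty.mp ha
  have : Nonempty (Fin b) := Fin.pos_iff_nonempty.mp hb
  obtain ⟨i₀, hi₀⟩ := exists_eq_ciSup_of_finite (f := hM.eigenvalues)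
  have hu : M *ᵥ hM.eigenvectorBasis i₀ =
      ((⨆ i, hM.eigenvalues i : ℝ) : ℂ) • hM.eigenvectorBasis i₀ := by
    rw [hM.mulVec_eigenvectorBasis, hi₀, RCLike.real_smul_eq_coe_smul (K := ℂ)]; rfl
  obtain ⟨⟨i₁, σ⟩, hσ⟩ := Function.ne_iff.mp <|
    (WithLp.ofLp_eq_zero (p := 2)).not.mpr (hM.eigenvectorBasis.orthonormal.ne_zero i₀)
  have hblock := (hcomm _ (isDiag_diagonal (Pi.single σ 1))).mulVec_mulVec_eq_smul hu
  rw [one_kronecker_diagonal_single_mulVec] at hblock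
  have hψ : WithLp.toLp 2 (fun i => hM.eigenvectorBasis i₀ (i, σ)) ≠ 0 := fun h =>
    hσ (congr_fun (congr_arg WithLp.ofLp h) i₁)
  obtain ⟨ψ, hψ1, hψM⟩ := exists_norm_eq_one_mulVec_prod_eq_smul hψ hblock
  exact ⟨σ, ψ, hψ1, hψM⟩
end
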